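/- Let a, ω ∈ ℂ, n ∈ ℕ, and z ∈ ℂ with ‖z‖ < 1. Then the n-th moment of the Christoffel-transformed Meixner weight satisfies ∑_{x=0}^∞ (x − ω)·φ_n(x)·(a)_x·z^x/x! = z^n·(a)_n·(1 − z)^{−a−n−1}·(a·z + ω·z + n − ω), where (1 − z)^{−a−n−1} denotes the principal branch of the complex power. -/

import Mathlib

/-!
Writing `(x - ω) φ_n(x) = φ_{n+1}(x) + (n - ω) φ_n(x)` reduces the claim to the plain moments
`∑ φ_n(x) (a)_x z^x / x! = z^n (a)_n (1 - z)^(-a-n)` of the Meixner weight. These follow from the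
binomial series `∑ (c)_k z^k / k! = (1 - z)^(-c)`: the terms with `x < n` vanish, and for
`x = k + n` one has `φ_n(x) / x! = 1 / k!` and `(a)_{k+n} = (a)_n (a + n)_k`.
-/

open Finset

/-- The Pochhammer symbol `(c)_n = ∏_{j=0}^{n-1} (c + j)`. -/
noncomputable def poch (c : ℂ) (n : ℕ) : ℂ := ∏ j ∈ Finset.range n, (c + (j : ℂ))

/-- The falling factorial `φ_n(x) = ∏_{j=0}^{n-1} (x - j)`. -/
noncomputable def fallFac (n : ℕ) (x : ℂ) : ℂ := ∏ j ∈ Finset.range n, (x - (j : ℂ))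

lemma poch_succ (c : ℂ) (n : ℕ) : poch c (n + 1) = poch c n * (c + n) :=
  prod_range_succ _ n

lemma poch_add (c : ℂ) (m k : ℕ) : poch c (m + k) = poch c m * poch (c + m) k := by
  simp only [poch, prod_range_add, Nat.cast_add, add_assoc]

lemma poch_eq_factorial_mul_choose (c : ℂ) (k : ℕ) :
    poch c k = k.factorial * Ring.choose (c + k - 1) k := by
  rw [Ring.choose_eq_smul, smul_eq_mul, ← mul_assoc,
    mul_inv_cancel₀ (Nat.cast_ne_zero.mpr k.factorial_ne_zero), one_mul,
    ← Polynomial.aeval_eq_smeval, Polynomial.aeval_def, Polynomial.eval₂_eq_eval_map,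
    descPochhammer_map, descPochhammer_eval_eq_prod_range, poch, ← prod_range_reflect]
  refine prod_congr rfl fun j hj => ?_
  have hk : ((k - 1 - j : ℕ) : ℂ) + j + 1 = k := by
    norm_cast
    have := mem_range.mp hj
    omega
  linear_combination hk

lemma fallFac_succ (n : ℕ) (x : ℂ) : fallFac (n + 1) x = fallFac n x * (x - n) :=
  prod_range_succ _ n

lemma fallFac_natCast (n m : ℕ) : fallFac n m = m.descFactorial n := by
  rw [fallFac, ← descPochhammer_eval_eq_prod_range, descPochhammer_eval_eq_descFactorial]

lemma fallFac_natCast_add_mul_factorial (n k : ℕ) :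
    fallFac n (k + n : ℕ) * k.factorial = (k + n).factorial := by
  rw [fallFac_natCast, mul_comm, ← Nat.cast_mul,
    ← Nat.factorial_mul_descFactorial (Nat.le_add_left n k), Nat.add_sub_cancel]

lemma sub_mul_fallFac (n : ℕ) (x ω : ℂ) :
    (x - ω) * fallFac n x = fallFac (n + 1) x + (n - ω) * fallFac n x := by
  rw [fallFac_succ]
  ring

lemma hasSum_poch_mul_pow_div_factorial (c : ℂ) {z : ℂ} (hz : ‖z‖ < 1) :
    HasSum (fun k : ℕ => poch c k * z ^ k / k.factorial) ((1 - z) ^ (-c)) := by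
  have h := (Complex.one_div_one_sub_cpow_hasFPowerSeriesOnBall_zero c).hasSum
    (y := z) (by simpa [← ofReal_norm] using hz)
  simp only [FormalMultilinearSeries.ofScalars_apply_eq, zero_add, smul_eq_mul] at h
  rw [Complex.cpow_neg, ← one_div]
  refine h.congr_fun fun k => ?_
  have : (k.factorial : ℂ) ≠ 0 := Nat.cast_ne_zero.mpr k.factorial_ne_zero
  rw [poch_eq_factorial_mul_choose]
  field_simp

lemma hasSum_fallFac_mul_poch_mul_pow_div_factorial (a : ℂ) (n : ℕ) {z : ℂ} (hz : ‖z‖ < 1) :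
    HasSum (fun x : ℕ => fallFac n x * poch a x * z ^ x / x.factorial)
      (z ^ n * poch a n * (1 - z) ^ (-(a + n))) := by
  rw [← hasSum_nat_add_iff' n]
  have hlow : ∀ x ∈ range n, fallFac n x * poch a x * z ^ x / x.factorial = 0 := fun x hx => by
    rw [fallFac_natCast, Nat.descFactorial_eq_zero_iff_lt.mpr (mem_range.mp hx)]
    simp
  rw [sum_eq_zero hlow, sub_zero]
  refine ((hasSum_poch_mul_pow_div_factorial (a + n) hz).mul_left (z ^ n * poch a n)).congr_fun
    fun k => ?_
  have hk : (k.factorial : ℂ) ≠ 0 := Nat.cast_ne_zero.mpr k.factorial_ne_zero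
  have hkn : ((k + n).factorial : ℂ) ≠ 0 := Nat.cast_ne_zero.mpr (k + n).factorial_ne_zero
  rw [eq_div_of_mul_eq hk (fallFac_natCast_add_mul_factorial n k),
    show poch a (k + n) = poch a n * poch (a + n) k by rw [add_comm, poch_add]]
  field_simp
  ring

/-- the `n`-th moment of the Christoffel-transformed Meixner weight:
`∑_{x≥0} (x-ω) φ_n(x) (a)_x z^x/x! = z^n (a)_n (1-z)^{-a-n-1} (az + ωz + n - ω)`
(principal branch). -/
theorem christoffel_meixner_moment (a ω : ℂ) (n : ℕ) (z : ℂ) (hz : ‖z‖ < 1) :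
    (∑' x : ℕ, ((x : ℂ) - ω) * fallFac n (x : ℂ) * poch a x * z ^ x / (x.factorial : ℂ))
      = z ^ n * poch a n * (1 - z) ^ (-a - (n : ℂ) - 1) * (a * z + ω * z + (n : ℂ) - ω) := by
  have h1z : (1 : ℂ) - z ≠ 0 := sub_ne_zero.mpr fun h => by simp [← h] at hz
  refine (((hasSum_fallFac_mul_poch_mul_pow_div_factorial a (n + 1) hz).add
    ((hasSum_fallFac_mul_poch_mul_pow_div_factorial a n hz).mul_left ((n : ℂ) - ω))).congr_fun
    fun x => ?_).tsum_eq.trans ?_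
  · rw [sub_mul_fallFac]
    ring
  · rw [show -(a + n) = (-a - n - 1) + 1 by ring, Complex.cpow_add _ _ h1z, Complex.cpow_one,
      poch_succ, show -(a + (n + 1 : ℕ)) = -a - n - 1 by push_cast; ring]
    ring
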